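/- Under the assumptions that A ∈ ℤ^{n×m} has full row rank, b ∈ ℤⁿ, every nonzero kernel vector of A has positive cost, and x > 0, the minimum energy feasible solution q satisfies |q_e| ≤ D·‖b/γ_A‖₁ for every coordinate e, where D and γ_A are as defined via the gcd-scaled determinants of A. -/

import Mathlib

/-!
Call `u` conformal to `q` if wherever `u` is nonzero it has the sign of `q`. Since `q` minimises
a weighted energy over the affine space `{f | A f = b}`, the first-order condition shows that a
conformal kernel vector `z` has zero cost `∑ c_e |z_e|`, so `z = 0`. Consequently every feasible
vector conformal to `q`, in particular `q` itself, is a convex combination of feasible vectors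
whose supports index linearly independent columns: otherwise a kernel vector supported on the
support can be followed in both directions until a coordinate vanishes. For such a basic vector,
Cramer's rule on a nonsingular `n × n` submatrix of `A / γ_A` containing the support, expanded
along one column, bounds each coordinate by `D ‖b / γ_A‖₁`, because that submatrix is integral
and so has determinant of absolute value at least `1`.
-/

open Matrix

section Conformal

variable {κ : Type*}

def IsConformalTo (u v : κ → ℝ) : Prop := ∀ e, u e ≠ 0 → 0 < u e * v e

namespace IsConformalTo

variable {u v w : κ → ℝ}

lemma mul_nonneg (h : IsConformalTo u v) (e : κ) : 0 ≤ u e * v e := by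
  by_cases hu : u e = 0
  · simp [hu]
  · exact (h e hu).le

lemma ne_zero (h : IsConformalTo u v) {e : κ} (hu : u e ≠ 0) : v e ≠ 0 :=
  right_ne_zero_of_mul (h e hu).ne'

lemma refl (v : κ → ℝ) : IsConformalTo v v := fun _ hv => mul_self_pos.mpr hv

lemma support_subset (h : IsConformalTo u v) : Function.support u ⊆ Function.support v :=
  fun _ hu => h.ne_zero hu

lemma of_mul_nonneg (hsupp : ∀ e, u e ≠ 0 → v e ≠ 0) (h : ∀ e, 0 ≤ u e * v e) :
    IsConformalTo u v :=
  fun e hu => (h e).lt_of_ne (mul_ne_zero hu (hsupp e hu)).symm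

lemma trans (huv : IsConformalTo u v) (hvw : IsConformalTo v w) : IsConformalTo u w := by
  intro e hu
  have h1 := huv e hu
  have h2 := hvw e (huv.ne_zero hu)
  have : 0 < (u e * w e) * v e ^ 2 := by nlinarith
  exact pos_of_mul_pos_left this (sq_nonneg _)

end IsConformalTo

lemma exists_pos_isConformalTo_add_smul [Fintype κ] {v z : κ → ℝ}
    (hsupp : ∀ e, z e ≠ 0 → v e ≠ 0) (h : ∃ e, z e * v e < 0) :
    ∃ t > 0, IsConformalTo (v + t • z) v ∧ ∃ e, v e ≠ 0 ∧ v e + t * z e = 0 := by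
  classical
  obtain ⟨e₀, he₀, hmin⟩ := Finset.exists_min_image ({e | z e * v e < 0} : Finset κ)
    (fun e => -v e / z e) (by simpa [Finset.Nonempty] using h)
  simp only [Finset.mem_filter, Finset.mem_univ, true_and] at he₀ hmin
  have hz₀ : z e₀ ≠ 0 := by rintro h; simp [h] at he₀
  set t := -v e₀ / z e₀
  have ht : 0 < t := by
    have : t = -(z e₀ * v e₀) / z e₀ ^ 2 := by simp only [t]; field_simp
    rw [this]
    exact div_pos (by linarith) (by positivity)
  refine ⟨t, ht, ?_, e₀, hsupp e₀ hz₀, by simp only [t]; field_simp; ring⟩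
  refine IsConformalTo.of_mul_nonneg (fun e he hv => he ?_) fun e => ?_
  · by_cases hz : z e = 0
    · simp [hv, hz]
    · exact absurd hv (hsupp e hz)
  · simp only [Pi.add_apply, Pi.smul_apply, smul_eq_mul]
    rcases le_or_gt 0 (z e * v e) with hzv | hzv
    · nlinarith [sq_nonneg (v e), mul_nonneg ht.le hzv]
    · have hz : z e ≠ 0 := by rintro h; simp [h] at hzv
      have key := mul_le_mul_of_nonpos_right (hmin e hzv) hzv.le
      have : -v e / z e * (z e * v e) = -v e ^ 2 := by field_simp
      nlinarith

lemma exists_mulVec_eq_zero_of_not_linearIndepOn {ι R : Type*} [Fintype κ] [CommRing R]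
    (A : Matrix ι κ R) {s : Set κ} (h : ¬ LinearIndepOn R A.col s) :
    ∃ z, z ≠ 0 ∧ A *ᵥ z = 0 ∧ Function.support z ⊆ s := by
  obtain ⟨f, hfs, hf, hf0⟩ := linearDepOn_iff'.mp h
  refine ⟨f, DFunLike.coe_injective.ne hf0, ?_, fun e he => hfs (by simpa using he)⟩
  rw [Finsupp.linearCombination_apply, Finsupp.sum_fintype _ _ (by simp)] at hf
  ext i
  simpa [mulVec, dotProduct, mul_comm] using congrFun hf i

theorem mem_convexHull_of_isConformalTo {ι : Type*} [Fintype κ] (A : Matrix ι κ ℝ)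
    (b : ι → ℝ) {q : κ → ℝ} (hq : ∀ z, A *ᵥ z = 0 → IsConformalTo z q → z = 0)
    {v : κ → ℝ} (hv : A *ᵥ v = b) (hvq : IsConformalTo v q) :
    v ∈ convexHull ℝ {u | A *ᵥ u = b ∧ LinearIndepOn ℝ A.col (Function.support u)} := by
  induction hcard : (Function.support v).ncard using Nat.strong_induction_on generalizing v
    with | _ k ih
  by_cases hind : LinearIndepOn ℝ A.col (Function.support v)
  · exact subset_convexHull ℝ _ ⟨hv, hind⟩
  have step : ∀ z, A *ᵥ z = 0 → Function.support z ⊆ Function.support v → z ≠ 0 →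
      ∃ t : ℝ, 0 < t ∧ v + t • z ∈
        convexHull ℝ {u | A *ᵥ u = b ∧ LinearIndepOn ℝ A.col (Function.support u)} := by
    intro z hz hzv hz0
    have hneg : ∃ e, z e * v e < 0 := by
      by_contra! hnn
      exact hz0 (hq z hz ((IsConformalTo.of_mul_nonneg (fun e he => hzv he) hnn).trans hvq))
    obtain ⟨t, ht, hconf, e, hve, hte⟩ :=
      exists_pos_isConformalTo_add_smul (v := v) (z := z) (fun e he => hzv he) hneg
    refine ⟨t, ht, ih _ ?_ (by simp [mulVec_add, mulVec_smul, hv, hz]) (hconf.trans hvq) rfl⟩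
    rw [← hcard]
    refine Set.ncard_lt_ncard ⟨hconf.support_subset, fun h => ?_⟩ (Set.toFinite _)
    exact h hve (by simpa using hte)
  obtain ⟨z, hz0, hz, hzv⟩ := exists_mulVec_eq_zero_of_not_linearIndepOn A hind
  obtain ⟨t₁, ht₁, h₁⟩ := step z hz hzv hz0
  obtain ⟨t₂, ht₂, h₂⟩ := step (-z) (by simp [mulVec_neg, hz]) (by simpa using hzv)
    (neg_ne_zero.mpr hz0)
  have hsum : 0 < t₁ + t₂ := by positivity
  convert convex_convexHull ℝ _ h₁ h₂ (div_pos ht₂ hsum).le (div_pos ht₁ hsum).le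
    (by field_simp; ring) using 1
  ext e
  simp only [Pi.add_apply, Pi.smul_apply, Pi.neg_apply, smul_eq_mul]
  field_simp
  ring

lemma sum_mul_mul_eq_zero_of_forall_le [Fintype κ] (w q z : κ → ℝ)
    (h : ∀ t : ℝ, ∑ e, w e * q e ^ 2 ≤ ∑ e, w e * (q e + t * z e) ^ 2) :
    ∑ e, w e * (z e * q e) = 0 := by
  have hquad : ∀ t : ℝ,
      0 ≤ (∑ e, w e * z e ^ 2) * (t * t) + (2 * ∑ e, w e * (z e * q e)) * t + 0 := by
    intro t
    have hexp : ∑ e, w e * (q e + t * z e) ^ 2 = ∑ e, w e * q e ^ 2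
        + ((∑ e, w e * z e ^ 2) * (t * t) + (2 * ∑ e, w e * (z e * q e)) * t + 0) := by
      simp only [Finset.mul_sum, Finset.sum_mul, ← Finset.sum_add_distrib, add_zero]
      exact Finset.sum_congr rfl fun e _ => by ring
    linarith [h t]
  have := discrim_le_zero hquad
  rw [discrim] at this
  nlinarith [sq_nonneg (∑ e, w e * (z e * q e))]

lemma IsConformalTo.eq_zero_of_mulVec_eq_zero {ι : Type*} [Fintype κ] {A : Matrix ι κ ℝ}
    {c w q z : κ → ℝ} (hw : ∀ e, 0 ≤ w e) (hcw : ∀ e, w e = 0 → c e = 0)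
    (hker : ∀ z, A *ᵥ z = 0 → z ≠ 0 → 0 < ∑ e, c e * |z e|)
    (hmin : ∀ z, A *ᵥ z = 0 → ∑ e, w e * q e ^ 2 ≤ ∑ e, w e * (q e + z e) ^ 2)
    (hzq : IsConformalTo z q) (hz : A *ᵥ z = 0) : z = 0 := by
  by_contra hz0
  have hterm : ∀ e, 0 ≤ w e * (z e * q e) :=
    fun e => _root_.mul_nonneg (hw e) (hzq.mul_nonneg e)
  have hsum := sum_mul_mul_eq_zero_of_forall_le w q z fun t => by
    simpa using hmin (t • z) (by rw [mulVec_smul, hz, smul_zero])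
  rw [Finset.sum_eq_zero_iff_of_nonneg fun e _ => hterm e] at hsum
  have hc : ∑ e, c e * |z e| = 0 := Finset.sum_eq_zero fun e _ => by
    by_cases hze : z e = 0
    · simp [hze]
    · have := hsum e (Finset.mem_univ e)
      rw [hcw e ((mul_eq_zero.mp this).resolve_right (hzq e hze).ne'), zero_mul]
  exact (hker z hz hz0).ne' hc

end Conformal

lemma Matrix.det_updateCol_mulVec {n R : Type*} [Fintype n] [DecidableEq n] [CommRing R]
    (N : Matrix n n R) (g : n → R) (j : n) :
    (N.updateCol j (N *ᵥ g)).det = N.det * g j := by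
  rw [← cramer_apply, cramer_eq_adjugate_mulVec, mulVec_mulVec, adjugate_mul, smul_mulVec,
    one_mulVec, Pi.smul_apply, smul_eq_mul]

lemma Matrix.abs_det_updateCol_le {n : ℕ} (N : Matrix (Fin (n + 1)) (Fin (n + 1)) ℝ)
    (j : Fin (n + 1)) (y : Fin (n + 1) → ℝ) {D : ℝ}
    (hD : ∀ i : Fin (n + 1), |(N.submatrix i.succAbove j.succAbove).det| ≤ D) :
    |(N.updateCol j y).det| ≤ D * ∑ i, |y i| := by
  rw [det_succ_column _ j, Finset.mul_sum]
  refine (Finset.abs_sum_le_sum_abs _ _).trans (Finset.sum_le_sum fun i _ => ?_)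
  have hminor : (N.updateCol j y).submatrix i.succAbove j.succAbove
      = N.submatrix i.succAbove j.succAbove := by
    ext a b
    simp
  rw [hminor, updateCol_self, abs_mul, abs_mul, abs_pow, abs_neg, abs_one, one_pow, one_mul,
    mul_comm]
  exact mul_le_mul_of_nonneg_right (hD i) (abs_nonneg _)

lemma Matrix.one_le_abs_det_map_intCast {n : Type*} [Fintype n] [DecidableEq n]
    (N : Matrix n n ℤ) (h : (N.map ((↑) : ℤ → ℝ)).det ≠ 0) :
    1 ≤ |(N.map ((↑) : ℤ → ℝ)).det| := by
  rw [← Int.cast_det] at h ⊢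
  rw [← Int.cast_abs]
  exact_mod_cast Int.one_le_abs (by exact_mod_cast h)

lemma Matrix.submatrix_mulVec_comp {ι κ μ R : Type*} [Fintype κ] [Fintype μ] [CommSemiring R]
    (M : Matrix ι κ R) {σ : μ → κ} (hσ : Function.Injective σ) {v : κ → R}
    (hv : Function.support v ⊆ Set.range σ) :
    M.submatrix id σ *ᵥ (v ∘ σ) = M *ᵥ v := by
  ext i
  refine Fintype.sum_of_injective σ hσ _ _ (fun e he => ?_) fun _ => rfl
  have : v e = 0 := by simpa using mt (@hv e) he
  simp [this]

lemma Matrix.exists_injective_det_submatrix_ne_zero {n : ℕ} {κ K : Type*} [Field K]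
    [Fintype κ] (A : Matrix (Fin n) κ K) (hrank : LinearIndependent K A.row) {s : Set κ}
    (hs : LinearIndepOn K A.col s) :
    ∃ σ : Fin n → κ, Function.Injective σ ∧ s ⊆ Set.range σ ∧
      (A.submatrix id σ).det ≠ 0 := by
  classical
  obtain ⟨b, -, hsb, hspan, hb⟩ := exists_linearIndepOn_extension hs (Set.subset_univ s)
  have hcols : Submodule.span K (Set.range A.col) = ⊤ := Submodule.eq_top_of_finrank_eq (by
    rw [← rank_eq_finrank_span_cols, hrank.rank_matrix, Fintype.card_fin, Module.finrank_fin_fun])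
  have htop : Submodule.span K (A.col '' b) = ⊤ :=
    top_unique (hcols ▸ Submodule.span_le.mpr (by simpa [Set.image_univ] using hspan))
  have hcard : Fintype.card b = n := by
    rw [linearIndependent_iff_card_eq_finrank_span.mp hb, Set.finrank, ← Set.image_eq_range, htop,
      finrank_top, Module.finrank_fin_fun]
  let τ := (Fintype.equivFinOfCardEq hcard).symm
  refine ⟨Subtype.val ∘ τ, Subtype.val_injective.comp τ.injective, fun e he => ?_, ?_⟩
  · exact ⟨τ.symm ⟨e, hsb he⟩, by simp⟩
  · rw [← isUnit_iff_ne_zero, ← isUnit_iff_isUnit_det, ← linearIndependent_cols_iff_isUnit]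
    exact hb.comp τ τ.injective

theorem abs_le_of_linearIndepOn_support {n : ℕ} {κ : Type*} [Fintype κ]
    (A : Matrix (Fin n) κ ℤ)
    (hrank : LinearIndependent ℝ (A.map ((↑) : ℤ → ℝ)).row) {D : ℝ} (hD0 : 0 ≤ D)
    (hD : ∀ (r : Fin (n - 1) → Fin n) (s : Fin (n - 1) → κ), Function.Injective r →
      Function.Injective s → |((A.map ((↑) : ℤ → ℝ)).submatrix r s).det| ≤ D)
    {y : Fin n → ℝ} {v : κ → ℝ} (hv : A.map ((↑) : ℤ → ℝ) *ᵥ v = y)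
    (hind : LinearIndepOn ℝ (A.map ((↑) : ℤ → ℝ)).col (Function.support v)) (e : κ) :
    |v e| ≤ D * ∑ i, |y i| := by
  by_cases hve : v e = 0
  · rw [hve, abs_zero]
    positivity
  obtain ⟨σ, hσ, hsupp, hdet⟩ := exists_injective_det_submatrix_ne_zero _ hrank hind
  obtain ⟨j, rfl⟩ := hsupp hve
  obtain _ | n := n
  · exact j.elim0
  set N := (A.map ((↑) : ℤ → ℝ)).submatrix id σ
  have hN : N *ᵥ (v ∘ σ) = y := by rw [submatrix_mulVec_comp _ hσ hsupp, hv]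
  have hcramer : |(N.updateCol j y).det| = |N.det| * |v (σ j)| := by
    rw [← hN, det_updateCol_mulVec, abs_mul, Function.comp_apply]
  have hminor : ∀ i : Fin (n + 1), |(N.submatrix i.succAbove j.succAbove).det| ≤ D :=
    fun i => hD _ _ (Fin.succAbove_right_injective) (hσ.comp Fin.succAbove_right_injective)
  calc |v (σ j)| ≤ |N.det| * |v (σ j)| :=
        le_mul_of_one_le_left (abs_nonneg _) (one_le_abs_det_map_intCast (A.submatrix id σ) hdet)
    _ = |(N.updateCol j y).det| := hcramer.symm
    _ ≤ D * ∑ i, |y i| := abs_det_updateCol_le N j y hminor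

lemma Finset.dvd_of_gcd_filter_ne_zero {α : Type*} [Fintype α] (f : α → ℤ)
    (a : α) : (Finset.univ.filter (fun a => f a ≠ 0)).gcd f ∣ f a := by
  by_cases ha : f a = 0
  · rw [ha]
    exact dvd_zero _
  · exact Finset.gcd_dvd (Finset.mem_filter.mpr ⟨Finset.mem_univ a, ha⟩)

theorem abs_le_of_forall_energy_le {n : ℕ} {κ : Type*} [Fintype κ] (A : Matrix (Fin n) κ ℤ)
    (hrank : LinearIndependent ℝ (A.map ((↑) : ℤ → ℝ)).row) {D : ℝ} (hD0 : 0 ≤ D)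
    (hD : ∀ (r : Fin (n - 1) → Fin n) (s : Fin (n - 1) → κ), Function.Injective r →
      Function.Injective s → |((A.map ((↑) : ℤ → ℝ)).submatrix r s).det| ≤ D)
    {c w : κ → ℝ} (hw : ∀ e, 0 ≤ w e) (hcw : ∀ e, w e = 0 → c e = 0)
    (hker : ∀ z, A.map ((↑) : ℤ → ℝ) *ᵥ z = 0 → z ≠ 0 → 0 < ∑ e, c e * |z e|)
    {y : Fin n → ℝ} {q : κ → ℝ} (hq : A.map ((↑) : ℤ → ℝ) *ᵥ q = y)
    (hmin : ∀ f, A.map ((↑) : ℤ → ℝ) *ᵥ f = y → ∑ e, w e * q e ^ 2 ≤ ∑ e, w e * f e ^ 2)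
    (e : κ) : |q e| ≤ D * ∑ i, |y i| := by
  have hcirc : ∀ z, A.map ((↑) : ℤ → ℝ) *ᵥ z = 0 → IsConformalTo z q → z = 0 :=
    fun z hz hzq => hzq.eq_zero_of_mulVec_eq_zero hw hcw hker
      (fun z hz => hmin (q + z) (by rw [mulVec_add, hq, hz, add_zero])) hz
  have hM : 0 ≤ D * ∑ i, |y i| := by positivity
  have hbasic : {u | A.map ((↑) : ℤ → ℝ) *ᵥ u = y ∧
      LinearIndepOn ℝ (A.map ((↑) : ℤ → ℝ)).col (Function.support u)} ⊆
      Metric.closedBall 0 (D * ∑ i, |y i|) := by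
    rintro u ⟨hu, hind⟩
    exact mem_closedBall_zero_iff.mpr ((pi_norm_le_iff_of_nonneg hM).mpr
      (abs_le_of_linearIndepOn_support A hrank hD0 hD hu hind))
  have hq_mem := convexHull_min hbasic (convex_closedBall _ _)
    (mem_convexHull_of_isConformalTo _ _ hcirc hq (IsConformalTo.refl q))
  exact (norm_le_pi_norm q e).trans (mem_closedBall_zero_iff.mp hq_mem)

/-- The minimum energy feasible solution satisfies |q_e| ≤ D·‖b/γ_A‖₁. -/
theorem min_energy_bound {n m : ℕ} (A : Matrix (Fin n) (Fin m) ℤ) (b : Fin n → ℤ)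
    (c x : Fin m → ℝ) (hc : 0 ≤ c) (hx : ∀ e, 0 < x e)
    (hrank : LinearIndependent ℝ (fun i : Fin n => fun j => (A i j : ℝ)))
    (γ : ℤ)
    (hγ : γ = (Finset.univ.filter (fun p : Fin n × Fin m => A p.1 p.2 ≠ 0)).gcd
      (fun p => A p.1 p.2))
    (hγpos : 0 < γ)
    (D : ℝ) (hDpos : 0 < D)
    (hD : ∀ (k : ℕ), (k = n - 1 ∨ k = n) →
      ∀ (r : Fin k → Fin n) (s : Fin k → Fin m),
        Function.Injective r → Function.Injective s →
        |Matrix.det (Matrix.of fun i j => (A (r i) (s j) : ℝ) / (γ : ℝ))| ≤ D)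
    (hker : ∀ z : Fin m → ℝ, (Matrix.of fun i j => (A i j : ℝ)).mulVec z = 0 →
      z ≠ 0 → 0 < ∑ e, c e * |z e|)
    (q : Fin m → ℝ)
    (hq : (Matrix.of fun i j => (A i j : ℝ)).mulVec q = (fun i => (b i : ℝ)))
    (hmin : ∀ f : Fin m → ℝ,
      (Matrix.of fun i j => (A i j : ℝ)).mulVec f = (fun i => (b i : ℝ)) →
      ∑ e, (c e / x e) * (q e) ^ 2 ≤ ∑ e, (c e / x e) * (f e) ^ 2) :
    ∀ e, |q e| ≤ D * ∑ i, |(b i : ℝ) / (γ : ℝ)| := by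
  have hγinv : (γ : ℝ)⁻¹ ≠ 0 := inv_ne_zero (by positivity)
  set Ā : Matrix (Fin n) (Fin m) ℤ := Matrix.of fun i j => A i j / γ
  have hĀ : Ā.map ((↑) : ℤ → ℝ) = Matrix.of fun i j => (A i j : ℝ) / γ := by
    ext i j
    have hdvd :=
      hγ ▸ Finset.dvd_of_gcd_filter_ne_zero (fun p : Fin n × Fin m => A p.1 p.2) (i, j)
    simp [Ā, Int.cast_div hdvd (by positivity : (γ : ℝ) ≠ 0)]
  have hĀ_smul : Ā.map ((↑) : ℤ → ℝ) = (γ : ℝ)⁻¹ • Matrix.of fun i j => (A i j : ℝ) := by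
    rw [hĀ]
    ext i j
    simp [div_eq_inv_mul]
  have hy : (fun i => (b i : ℝ) / γ) = (γ : ℝ)⁻¹ • fun i => (b i : ℝ) := by
    ext i
    simp [div_eq_inv_mul]
  intro e
  refine abs_le_of_forall_energy_le Ā ?_ hDpos.le
    (fun r s hr hs => hĀ ▸ hD _ (Or.inl rfl) r s hr hs)
    (w := fun e => c e / x e) (fun e => div_nonneg (hc e) (hx e).le)
    (fun e h => (div_eq_zero_iff.mp h).resolve_right (hx e).ne') (fun z hz => hker z ?_)
    (y := fun i => (b i : ℝ) / γ) ?_ (fun f hf => hmin f ?_) e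
  · rw [hĀ_smul]
    exact hrank.units_smul fun _ => Units.mk0 _ hγinv
  · rwa [hĀ_smul, smul_mulVec, smul_eq_zero_iff_right hγinv] at hz
  · rw [hĀ_smul, smul_mulVec, hq, hy]
  · rwa [hĀ_smul, smul_mulVec, hy, smul_right_inj hγinv] at hf
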